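/- arXiv:2408.12346 — 9 statements merged into one kernel-verified Lean document; each statement's English description precedes it below -/
import Mathlib

section
/- RJ-consequence satisfies left logical equivalence: if Δ ∪ {γ} ⊨_RJ φ (multiset union) and γ is classically equivalent to δ, then Δ ∪ {δ} ⊨_RJ φ. -/
open scoped Classical ENNReal

/-- Classical propositional formulas over atoms `α`. -/
inductive Fm (α : Type) : Type
  | var : α → Fm α
  | neg : Fm α → Fm α
  | and : Fm α → Fm α → Fm α
  | or  : Fm α → Fm α → Fm α

/-- Truth of a formula under a valuation. -/
def Fm.eval {α : Type} (v : α → Prop) : Fm α → Prop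
  | .var a => v a
  | .neg φ => ¬ Fm.eval v φ
  | .and φ ψ => Fm.eval v φ ∧ Fm.eval v ψ
  | .or φ ψ => Fm.eval v φ ∨ Fm.eval v ψ

/-- A finitely additive probability function on the Lindenbaum algebra:
normalised on tautologies, additive on incompatible disjuncts,
invariant under classical equivalence. -/
structure ProbFun (α : Type) where
  P : Fm α → ℝ
  nonneg : ∀ φ, 0 ≤ P φ
  norm : ∀ φ, (∀ v, φ.eval v) → P φ = 1
  add : ∀ φ ψ, (∀ v, ¬ (φ.eval v ∧ ψ.eval v)) → P (φ.or ψ) = P φ + P ψ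
  congr : ∀ φ ψ, (∀ v, φ.eval v ↔ ψ.eval v) → P φ = P ψ

/-- Conditional probability `P(δ | H) = P(δ ∧ H) / P(H)`. -/
noncomputable def ProbFun.cond {α : Type} (P : ProbFun α) (δ H : Fm α) : ℝ :=
  P.P (δ.and H) / P.P H

/-- The semantic content of the formula `T`: the hypotheses in `Hs` are
mutually exclusive and jointly exhaustive at `v`. -/
def partitionHolds {α : Type} (Hs : List (Fm α)) (v : α → Prop) : Prop :=
  (∃ h ∈ Hs, Fm.eval v h) ∧
  ∀ h ∈ Hs, ∀ h' ∈ Hs, h ≠ h' → ¬ (Fm.eval v h ∧ Fm.eval v h')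

/-- `T, φ ⊨ ψ` : entailment modulo the partition formula `T`. -/
def TEntails {α : Type} (Hs : List (Fm α)) (φ ψ : Fm α) : Prop :=
  ∀ v, partitionHolds Hs v → φ.eval v → ψ.eval v

/-- A degree of rejection (Definition `degrej`, conditions (1)-(3);
aggregation (4) is via `RejDeg.rM`). -/
structure RejDeg (α : Type) (Hs : List (Fm α)) where
  r : Fm α → Fm α → ℝ≥0∞
  mono : ∀ γ δ H, H ∈ Hs → TEntails Hs γ δ → r δ H ≤ r γ H
  zero : ∀ δ H, H ∈ Hs → TEntails Hs H δ → r δ H = 0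
  pos : ∀ δ H, H ∈ Hs → TEntails Hs δ H.neg → 0 < r δ H

/-- Additive aggregation of rejection degrees over a multiset of data. -/
noncomputable def RejDeg.rM {α : Type} {Hs : List (Fm α)} (d : RejDeg α Hs)
    (Δ : Multiset (Fm α)) (H : Fm α) : ℝ≥0∞ :=
  (Δ.map (fun δ => d.r δ H)).sum

/-- `Ĥ_Δ`: the hypotheses with finite rejection degree minimizing `r_Δ`. -/
def RejDeg.minSet {α : Type} {Hs : List (Fm α)} (d : RejDeg α Hs)
    (Δ : Multiset (Fm α)) : Set (Fm α) :=
  {H | H ∈ Hs ∧ d.rM Δ H ≠ ⊤ ∧ ∀ H' ∈ Hs, d.rM Δ H ≤ d.rM Δ H'}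

/-- RJ-consequence: `T, H ⊨ φ` for every least-rejected hypothesis. -/
def RJ {α : Type} {Hs : List (Fm α)} (d : RejDeg α Hs)
    (Δ : Multiset (Fm α)) (φ : Fm α) : Prop :=
  ∀ H ∈ d.minSet Δ, TEntails Hs H φ

/-- Maximum-likelihood rejection degree `r^l_δ(H) = P(¬δ | H)`. -/
noncomputable def rl {α : Type} (P : ProbFun α) (δ H : Fm α) : ℝ :=
  P.cond δ.neg H

/-- Additive aggregation of `r^l` over a multiset of data. -/
noncomputable def rlM {α : Type} (P : ProbFun α) (Δ : Multiset (Fm α)) (H : Fm α) : ℝ :=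
  (Δ.map (fun δ => rl P δ H)).sum

/-- The least-rejected hypotheses under `r^l`. -/
def minSetL {α : Type} (P : ProbFun α) (Hs : List (Fm α)) (Δ : Multiset (Fm α)) :
    Set (Fm α) :=
  {H | H ∈ Hs ∧ ∀ H' ∈ Hs, rlM P Δ H ≤ rlM P Δ H'}

/-- lRJ-consequence. -/
def lRJ {α : Type} (P : ProbFun α) (Hs : List (Fm α)) (Δ : Multiset (Fm α))
    (φ : Fm α) : Prop :=
  ∀ H ∈ minSetL P Hs Δ, TEntails Hs H φ

/-- The Ulam–Rényi rejection degree `r^u` of a single datum. -/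
noncomputable def ru {α : Type} (Hs : List (Fm α)) (δ H : Fm α) : ℝ≥0∞ :=
  if ∀ v, partitionHolds Hs v → ¬ δ.eval v then ⊤
  else if TEntails Hs H δ.neg then 1 else 0

/-- Additive aggregation of `r^u` over a multiset of data. -/
noncomputable def ruM {α : Type} (Hs : List (Fm α)) (Δ : Multiset (Fm α)) (H : Fm α) : ℝ≥0∞ :=
  (Δ.map (fun δ => ru Hs δ H)).sum

/-- The least-rejected hypotheses (among those with finite degree) under `r^u`. -/
def minSetU {α : Type} (Hs : List (Fm α)) (Δ : Multiset (Fm α)) : Set (Fm α) :=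
  {H | H ∈ Hs ∧ ruM Hs Δ H ≠ ⊤ ∧ ∀ H' ∈ Hs, ruM Hs Δ H ≤ ruM Hs Δ H'}

/-- uRJ-consequence. -/
def uRJ {α : Type} (Hs : List (Fm α)) (Δ : Multiset (Fm α)) (φ : Fm α) : Prop :=
  ∀ H ∈ minSetU Hs Δ, TEntails Hs H φ

theorem stmt6 {α : Type} {Hs : List (Fm α)} (d : RejDeg α Hs)
    (Δ : Multiset (Fm α)) (γ δ φ : Fm α)
    (h1 : RJ d (γ ::ₘ Δ) φ) (heq : ∀ v, γ.eval v ↔ δ.eval v) :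
    RJ d (δ ::ₘ Δ) φ := by
  have hr : ∀ H ∈ Hs, d.r δ H = d.r γ H := by
    intro H hH
    exact le_antisymm
      (d.mono γ δ H hH (fun v _ hv => (heq v).mp hv))
      (d.mono δ γ H hH (fun v _ hv => (heq v).mpr hv))
  have hrM : ∀ H ∈ Hs, d.rM (δ ::ₘ Δ) H = d.rM (γ ::ₘ Δ) H := by
    intro H hH
    simp [RejDeg.rM, hr H hH]
  intro H hH
  apply h1
  obtain ⟨hmem, hfin, hmin⟩ := hH
  refine ⟨hmem, ?_, ?_⟩
  · rwa [← hrM H hmem]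
  · intro H' hH'
    rw [← hrM H hmem, ← hrM H' hH']
    exact hmin H' hH'
end

section
/- There exists a degree of rejection r and formulas γ, δ and a hypothesis H_1 such that γ ⊨_RJ H_1 but γ ∧ δ ⊭_RJ H_1; i.e., unrestricted antecedent monotonicity (AMON) fails for RJ-consequence. -/
open scoped Classical ENNReal

-- Auxiliary construction for stmt7
namespace Stmt7

noncomputable section

def va : ℕ → Prop := fun n => n = 0 ∨ n = 1
def vb : ℕ → Prop := fun n => n = 0
def vc : ℕ → Prop := fun n => n = 1 ∨ n = 2
def vd : ℕ → Prop := fun _ => False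

def H1 : Fm ℕ := Fm.var 0
def H2 : Fm ℕ := (Fm.var 0).neg

def rr (φ H : Fm ℕ) : ℝ≥0∞ :=
  if H = H1 then (if φ.eval va then 0 else 4) + (if φ.eval vb then 0 else 1)
  else (if φ.eval vc then 0 else 2) + (if φ.eval vd then 0 else 2)

lemma H2_ne_H1 : H2 ≠ H1 := by simp [H1, H2]

lemma partAll : ∀ v, partitionHolds [H1, H2] v := by
  intro v
  constructor
  · by_cases h : v 0
    · exact ⟨H1, by simp, h⟩
    · exact ⟨H2, by simp, h⟩
  · intro h hh h' hh' hne
    simp only [List.mem_cons, List.mem_singleton, List.not_mem_nil, or_false] at hh hh'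
    rcases hh with rfl | rfl <;> rcases hh' with rfl | rfl <;>
      simp_all [H1, H2, Fm.eval]

lemma if_le {γ δ : Fm ℕ} (hent : ∀ v, γ.eval v → δ.eval v) (v : ℕ → Prop) (c : ℝ≥0∞) :
    (if δ.eval v then 0 else c) ≤ (if γ.eval v then 0 else c) := by
  by_cases h : δ.eval v
  · simp [h]
  · rw [if_neg h, if_neg (fun hg => h (hent v hg))]

lemma tent_iff (φ ψ : Fm ℕ) : TEntails [H1, H2] φ ψ ↔ ∀ v, φ.eval v → ψ.eval v := by
  constructor
  · intro h v; exact h v (partAll v)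
  · intro h v _; exact h v

lemma rr_mono : ∀ γ δ H, H ∈ [H1, H2] → TEntails [H1, H2] γ δ → rr δ H ≤ rr γ H := by
  intro γ δ H _ hent
  rw [tent_iff] at hent
  unfold rr
  split
  · exact add_le_add (if_le hent _ _) (if_le hent _ _)
  · exact add_le_add (if_le hent _ _) (if_le hent _ _)

lemma rr_zero : ∀ δ H, H ∈ [H1, H2] → TEntails [H1, H2] H δ → rr δ H = 0 := by
  intro δ H hH hent
  rw [tent_iff] at hent
  simp only [List.mem_cons, List.mem_singleton, List.not_mem_nil, or_false] at hH
  unfold rr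
  rcases hH with rfl | rfl
  · rw [if_pos rfl,
      if_pos (hent va (by simp [H1, Fm.eval, va])),
      if_pos (hent vb (by simp [H1, Fm.eval, vb]))]; simp
  · rw [if_neg H2_ne_H1,
      if_pos (hent vc (by simp [H2, Fm.eval, vc])),
      if_pos (hent vd (by simp [H2, Fm.eval, vd]))]; simp

lemma rr_pos : ∀ δ H, H ∈ [H1, H2] → TEntails [H1, H2] δ H.neg → 0 < rr δ H := by
  intro δ H hH hent
  rw [tent_iff] at hent
  simp only [List.mem_cons, List.mem_singleton, List.not_mem_nil, or_false] at hH
  unfold rr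
  rcases hH with rfl | rfl
  · rw [if_pos rfl]
    have : ¬ δ.eval va := fun h => hent _ h (by simp [H1, Fm.eval, va])
    rw [if_neg this]
    exact lt_of_lt_of_le (by norm_num) le_self_add
  · rw [if_neg H2_ne_H1]
    have : ¬ δ.eval vc := fun h => hent _ h (by simp [H2, Fm.eval, vc])
    rw [if_neg this]
    exact lt_of_lt_of_le (by norm_num) le_self_add

def d : RejDeg ℕ [H1, H2] := ⟨rr, rr_mono, rr_zero, rr_pos⟩

end

end Stmt7

theorem stmt7 : ∃ (H₁ H₂ : Fm ℕ), ∃ (d : RejDeg ℕ [H₁, H₂]), ∃ γ δ : Fm ℕ,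
    RJ d {γ} H₁ ∧ ¬ RJ d {γ.and δ} H₁ := by
  classical
  refine ⟨Stmt7.H1, Stmt7.H2, Stmt7.d, Fm.var 1, Fm.var 2, ?_, ?_⟩
  · -- RJ d {γ} H1
    intro H hH
    obtain ⟨hmem, _, hmin⟩ := hH
    simp only [List.mem_cons, List.mem_singleton, List.not_mem_nil, or_false] at hmem
    rcases hmem with rfl | rfl
    · intro v _ h; exact h
    · exfalso
      have h1 := hmin Stmt7.H1 (by simp)
      simp only [RejDeg.rM, Multiset.map_singleton, Multiset.sum_singleton,
        Stmt7.d, Stmt7.rr, if_pos rfl, if_neg Stmt7.H2_ne_H1] at h1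
      have hva : (Fm.var 1).eval Stmt7.va := Or.inr rfl
      have hvb : ¬ (Fm.var 1).eval Stmt7.vb := by simp [Fm.eval, Stmt7.vb]
      have hvc : (Fm.var 1).eval Stmt7.vc := Or.inl rfl
      have hvd : ¬ (Fm.var 1).eval Stmt7.vd := by simp [Fm.eval, Stmt7.vd]
      rw [if_pos hva, if_neg hvb, if_pos hvc, if_neg hvd] at h1
      norm_num at h1
  · -- not RJ
    intro hRJ
    have hva : ¬ ((Fm.var 1).and (Fm.var 2)).eval Stmt7.va := by
      simp [Fm.eval, Stmt7.va]
    have hvb : ¬ ((Fm.var 1).and (Fm.var 2)).eval Stmt7.vb := by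
      simp [Fm.eval, Stmt7.vb]
    have hvc : ((Fm.var 1).and (Fm.var 2)).eval Stmt7.vc := ⟨Or.inl rfl, Or.inr rfl⟩
    have hvd : ¬ ((Fm.var 1).and (Fm.var 2)).eval Stmt7.vd := by
      simp [Fm.eval, Stmt7.vd]
    have hmem : Stmt7.H2 ∈ Stmt7.d.minSet {(Fm.var 1).and (Fm.var 2)} := by
      refine ⟨by simp, ?_, ?_⟩
      · simp only [RejDeg.rM, Multiset.map_singleton, Multiset.sum_singleton,
          Stmt7.d, Stmt7.rr, if_neg Stmt7.H2_ne_H1, if_pos hvc, if_neg hvd]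
        norm_num
      · intro H' hH'
        simp only [List.mem_cons, List.mem_singleton, List.not_mem_nil, or_false] at hH'
        simp only [RejDeg.rM, Multiset.map_singleton, Multiset.sum_singleton, Stmt7.d,
          Stmt7.rr, if_neg Stmt7.H2_ne_H1, if_pos hvc, if_neg hvd]
        rcases hH' with rfl | rfl
        · rw [if_pos rfl, if_neg hva, if_neg hvb]
          norm_num
        · rw [if_neg Stmt7.H2_ne_H1]
    have := hRJ Stmt7.H2 hmem Stmt7.vd (Stmt7.partAll _)
      (by simp [Stmt7.H2, Fm.eval, Stmt7.vd])
    simp [Stmt7.H1, Fm.eval, Stmt7.vd] at this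
end

section
/- There exists a degree of rejection r, a formula γ with γ ⊨_RJ H_1, and a formula δ such that the multiset {γ, δ} ⊭_RJ H_1; i.e., multiset monotonicity (MMON) fails for RJ-consequence. -/
open scoped Classical ENNReal

namespace Stmt8Aux

abbrev H1 : Fm ℕ := .var 0
abbrev H2 : Fm ℕ := .neg (.var 0)
abbrev Hs : List (Fm ℕ) := [H1, H2]

lemma part_all (v : ℕ → Prop) : partitionHolds Hs v := by
  constructor
  · by_cases h : v 0
    · exact ⟨H1, by simp, h⟩
    · exact ⟨H2, by simp, h⟩
  · intro h hh h' hh' hne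
    simp only [Hs, List.mem_cons, List.mem_singleton, List.not_mem_nil, or_false] at hh hh'
    rcases hh with rfl | rfl <;> rcases hh' with rfl | rfl <;>
      simp_all [Fm.eval]

lemma not_TE_H1_negH1 : ¬ TEntails Hs H1 H1.neg := by
  intro h
  exact h (fun _ => True) (part_all _) trivial trivial

lemma TE_H2_negH1 : TEntails Hs H2 H1.neg := fun v _ h => h

lemma TE_H1_negH2 : TEntails Hs H1 H2.neg := fun v _ h => not_not_intro h

lemma not_TE_H2_negH2 : ¬ TEntails Hs H2 H2.neg := by
  intro h
  have := h (fun _ => False) (part_all _) (by simp [Fm.eval])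
  exact this (by simp [Fm.eval])

lemma not_TE_H2_H1 : ¬ TEntails Hs H2 H1 := by
  intro h
  exact h (fun _ => False) (part_all _) (by simp [Fm.eval])

noncomputable def r (δ H : Fm ℕ) : ℝ≥0∞ :=
  if TEntails Hs H δ.neg then 1 else 0

noncomputable def d : RejDeg ℕ Hs where
  r := r
  mono := by
    intro γ δ H _ hγδ
    unfold r
    by_cases h : TEntails Hs H δ.neg
    · have : TEntails Hs H γ.neg := fun v hv hH hγ => h v hv hH (hγδ v hv hγ)
      simp [h, this]
    · simp [h]
  zero := by
    intro δ H hH hE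
    unfold r
    simp only [Hs, List.mem_cons, List.mem_singleton, List.not_mem_nil, or_false] at hH
    rcases hH with rfl | rfl
    · have : ¬ TEntails Hs H1 δ.neg := by
        intro h
        have hp := part_all (fun _ => True)
        exact h _ hp trivial (hE _ hp trivial)
      simp [this]
    · have : ¬ TEntails Hs H2 δ.neg := by
        intro h
        have hp := part_all (fun _ => False)
        have h2 : Fm.eval (fun _ => False) H2 := by simp [Fm.eval]
        exact h _ hp h2 (hE _ hp h2)
      simp [this]
  pos := by
    intro δ H hH hE
    unfold r
    have : TEntails Hs H δ.neg := fun v hv hH' hδ => hE v hv hδ hH'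
    simp [this]

lemma rγH1 : d.r H1 H1 = 0 := by simp [d, r, not_TE_H1_negH1]
lemma rγH2 : d.r H1 H2 = 1 := by simp [d, r, TE_H2_negH1]
lemma rδH1 : d.r H2 H1 = 1 := by simp [d, r, TE_H1_negH2]
lemma rδH2 : d.r H2 H2 = 0 := by simp [d, r, not_TE_H2_negH2]

end Stmt8Aux

theorem stmt8 : ∃ (H₁ H₂ : Fm ℕ), ∃ (d : RejDeg ℕ [H₁, H₂]), ∃ γ δ : Fm ℕ,
    RJ d {γ} H₁ ∧ ¬ RJ d ({γ, δ} : Multiset (Fm ℕ)) H₁ := by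
  refine ⟨Stmt8Aux.H1, Stmt8Aux.H2, Stmt8Aux.d, Stmt8Aux.H1, Stmt8Aux.H2, ?_, ?_⟩
  · intro H hH
    obtain ⟨hmem, _, hmin⟩ := hH
    have h1 := hmin Stmt8Aux.H1 (by simp)
    simp only [List.mem_cons, List.mem_singleton, List.not_mem_nil, or_false] at hmem
    rcases hmem with rfl | rfl
    · exact fun v _ h => h
    · exfalso
      simp [RejDeg.rM, Stmt8Aux.rγH1, Stmt8Aux.rγH2] at h1
  · intro h
    have hmem : Stmt8Aux.H2 ∈ Stmt8Aux.d.minSet {Stmt8Aux.H1, Stmt8Aux.H2} := by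
      refine ⟨by simp, ?_, ?_⟩
      · simp [RejDeg.rM, Stmt8Aux.rγH2, Stmt8Aux.rδH2]
      · intro H' hH'
        simp only [List.mem_cons, List.mem_singleton, List.not_mem_nil, or_false] at hH'
        rcases hH' with rfl | rfl <;>
          simp [RejDeg.rM, Stmt8Aux.rγH1, Stmt8Aux.rγH2, Stmt8Aux.rδH1, Stmt8Aux.rδH2]
    exact Stmt8Aux.not_TE_H2_H1 (h _ hmem)
end

section
/- Under the assumptions that Fm_D ∩ Fm_H ≠ ∅, the hypotheses partition truth (formula T), and r_δ(H) = ∞ for all H whenever T ⊨ ¬δ, RJ-consequence satisfies cautious monotonicity (CMO): if Δ ⊨_RJ ψ and Δ ⊨_RJ δ then Δ ∪ {δ} ⊨_RJ ψ. -/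
open scoped Classical ENNReal

theorem stmt9 {α : Type} {Hs : List (Fm α)} (d : RejDeg α Hs)
    (hinf : ∀ δ : Fm α, (∀ v, partitionHolds Hs v → ¬ δ.eval v) →
      ∀ H ∈ Hs, d.r δ H = ⊤)
    (Δ : Multiset (Fm α)) (δ ψ : Fm α)
    (h1 : RJ d Δ ψ) (h2 : RJ d Δ δ) : RJ d (δ ::ₘ Δ) ψ := by
  intro H hH
  obtain ⟨hHs, hfin, hmin⟩ := hH
  have hcons : ∀ H', d.rM (δ ::ₘ Δ) H' = d.r δ H' + d.rM Δ H' := by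
    intro H'; simp [RejDeg.rM]
  -- rM Δ H ≤ rM (δ::Δ) H
  have hle : d.rM Δ H ≤ d.rM (δ ::ₘ Δ) H := by
    rw [hcons]; exact le_add_self
  have hfinΔ : d.rM Δ H ≠ ⊤ := fun h => hfin (top_le_iff.mp (h ▸ hle))
  -- find a minimizer H0 of rM Δ over Hs
  obtain ⟨H0, hH0mem, hH0min⟩ :=
    Finset.exists_min_image Hs.toFinset (fun H' => d.rM Δ H')
      ⟨H, List.mem_toFinset.mpr hHs⟩
  have hH0Hs : H0 ∈ Hs := List.mem_toFinset.mp hH0mem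
  have hH0min' : ∀ H' ∈ Hs, d.rM Δ H0 ≤ d.rM Δ H' := fun H' h =>
    hH0min H' (List.mem_toFinset.mpr h)
  have hH0fin : d.rM Δ H0 ≠ ⊤ := fun h =>
    hfinΔ (top_le_iff.mp (h ▸ hH0min' H hHs))
  -- H0 ∈ minSet Δ, so TEntails Hs H0 δ, so r δ H0 = 0
  have hH0minSet : H0 ∈ d.minSet Δ := ⟨hH0Hs, hH0fin, hH0min'⟩
  have hr0 : d.r δ H0 = 0 := d.zero δ H0 hH0Hs (h2 H0 hH0minSet)
  have hH0cons : d.rM (δ ::ₘ Δ) H0 = d.rM Δ H0 := by rw [hcons, hr0, zero_add]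
  -- H ∈ minSet Δ
  have hHmin : ∀ H' ∈ Hs, d.rM Δ H ≤ d.rM Δ H' := by
    intro H' h
    calc d.rM Δ H ≤ d.rM (δ ::ₘ Δ) H := hle
      _ ≤ d.rM (δ ::ₘ Δ) H0 := hmin H0 hH0Hs
      _ = d.rM Δ H0 := hH0cons
      _ ≤ d.rM Δ H' := hH0min' H' h
  exact h1 H ⟨hHs, hfinΔ, hHmin⟩
end

section
/- Under the same assumptions as for CMO, RJ-consequence satisfies CUT: if Δ ∪ {δ} ⊨_RJ ψ and Δ ⊨_RJ δ then Δ ⊨_RJ ψ. -/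
open scoped Classical ENNReal

theorem stmt10 {α : Type} {Hs : List (Fm α)} (d : RejDeg α Hs)
    (hinf : ∀ δ : Fm α, (∀ v, partitionHolds Hs v → ¬ δ.eval v) →
      ∀ H ∈ Hs, d.r δ H = ⊤)
    (Δ : Multiset (Fm α)) (δ ψ : Fm α)
    (h1 : RJ d (δ ::ₘ Δ) ψ) (h2 : RJ d Δ δ) : RJ d Δ ψ := by
  intro H hH
  obtain ⟨hHs, hfin, hmin⟩ := hH
  have hz : d.r δ H = 0 := d.zero δ H hHs (h2 H ⟨hHs, hfin, hmin⟩)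
  have hEq : d.rM (δ ::ₘ Δ) H = d.rM Δ H := by
    simp [RejDeg.rM, hz]
  apply h1 H
  refine ⟨hHs, by rw [hEq]; exact hfin, ?_⟩
  intro H' hH'
  rw [hEq]
  calc d.rM Δ H ≤ d.rM Δ H' := hmin H' hH'
    _ ≤ d.r δ H' + d.rM Δ H' := le_add_self
    _ = d.rM (δ ::ₘ Δ) H' := by simp [RejDeg.rM]
end

section
/- The lRJ-consequence relation (RJ-consequence with r = r^l where r^l_δ(H) = P(¬δ|H)) satisfies conjunction on the left (AND_l): if Δ ∪ {γ, δ} ⊨_lRJ φ and ¬γ ∧ ¬δ is unsatisfiable, then Δ ∪ {γ ∧ δ} ⊨_lRJ φ; and conversely (AND_l^con): if Δ ∪ {γ ∧ δ} ⊨_lRJ φ and ¬γ ∧ ¬δ is unsatisfiable, then Δ ∪ {γ, δ} ⊨_lRJ φ. -/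
open scoped Classical ENNReal

theorem stmt12 {α : Type} (P : ProbFun α) (Hs : List (Fm α))
    (hP : ∀ H ∈ Hs, 0 < P.P H)
    (Δ : Multiset (Fm α)) (γ δ φ : Fm α)
    (hinc : ∀ v, ¬ ((Fm.neg γ).eval v ∧ (Fm.neg δ).eval v)) :
    (lRJ P Hs (γ ::ₘ δ ::ₘ Δ) φ → lRJ P Hs ((γ.and δ) ::ₘ Δ) φ) ∧
    (lRJ P Hs ((γ.and δ) ::ₘ Δ) φ → lRJ P Hs (γ ::ₘ δ ::ₘ Δ) φ) := by
  have key : ∀ H : Fm α, rlM P (γ ::ₘ δ ::ₘ Δ) H = rlM P ((γ.and δ) ::ₘ Δ) H := by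
    intro H
    have hcongr : P.P ((γ.and δ).neg.and H) =
        P.P (((γ.neg).and H).or ((δ.neg).and H)) := by
      apply P.congr
      intro v
      simp only [Fm.eval]
      tauto
    have hadd : P.P (((γ.neg).and H).or ((δ.neg).and H)) =
        P.P ((γ.neg).and H) + P.P ((δ.neg).and H) := by
      apply P.add
      intro v hv
      exact hinc v ⟨hv.1.1, hv.2.1⟩
    have hrl : rl P (γ.and δ) H = rl P γ H + rl P δ H := by
      simp only [rl, ProbFun.cond, hcongr, hadd, add_div]
    simp only [rlM, Multiset.map_cons, Multiset.sum_cons, hrl]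
    ring
  have hmin : minSetL P Hs (γ ::ₘ δ ::ₘ Δ) = minSetL P Hs ((γ.and δ) ::ₘ Δ) := by
    ext H
    simp only [minSetL, Set.mem_setOf_eq, key]
  constructor
  · intro h H hH
    exact h H (hmin ▸ hH)
  · intro h H hH
    exact h H (hmin ▸ hH)
end

section
/- The XOR rule fails for lRJ-consequence: there exist a three-element hypothesis set {H_1,H_2,H_3}, a probability function P, and jointly unsatisfiable data formulas γ, δ such that {δ} ⊨_lRJ (H_2 ∨ H_3) and {γ} ⊨_lRJ (H_2 ∨ H_3), yet {δ ∨ γ} ⊭_lRJ (H_2 ∨ H_3). -/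
open scoped Classical ENNReal

/-- The valuation of the world with hypothesis `i` and data-state `j`
(`j = 0`: ¬δ∧γ, `j = 1`: δ∧¬γ, `j = 2`: ¬δ∧¬γ). -/
def myVal (i j : ℕ) : ℕ → Prop := fun n => n = i ∨ (j = 1 ∧ n = 3) ∨ (j = 0 ∧ n = 4)

/-- Nine weighted worlds. -/
def myW : List (ℝ × (ℕ → Prop)) :=
  [(5, myVal 0 0), (4, myVal 0 1), (1, myVal 0 2),
   (3, myVal 1 0), (5, myVal 1 1), (2, myVal 1 2),
   (7, myVal 2 0), (1, myVal 2 1), (2, myVal 2 2)]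

noncomputable def myPval (φ : Fm ℕ) : ℝ :=
  ((myW.map fun p => if φ.eval p.2 then p.1 else 0).sum) / 30

lemma myW_or_sum (L : List (ℝ × (ℕ → Prop))) (φ ψ : Fm ℕ)
    (h : ∀ v, ¬ (φ.eval v ∧ ψ.eval v)) :
    (L.map fun p => if (φ.or ψ).eval p.2 then p.1 else 0).sum =
      (L.map fun p => if φ.eval p.2 then p.1 else 0).sum +
      (L.map fun p => if ψ.eval p.2 then p.1 else 0).sum := by
  induction L with
  | nil => simp
  | cons a L ih =>
    simp only [List.map_cons, List.sum_cons, ih]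
    have : (if (φ.or ψ).eval a.2 then a.1 else 0) =
        (if φ.eval a.2 then a.1 else 0) + (if ψ.eval a.2 then a.1 else 0) := by
      by_cases h1 : φ.eval a.2 <;> by_cases h2 : ψ.eval a.2
      · exact absurd ⟨h1, h2⟩ (h a.2)
      all_goals simp [Fm.eval, h1, h2]
    rw [this]; ring

noncomputable def myP : ProbFun ℕ where
  P := myPval
  nonneg := by
    intro φ
    apply div_nonneg _ (by norm_num)
    apply List.sum_nonneg
    intro x hx
    simp only [List.mem_map] at hx
    obtain ⟨p, hp, rfl⟩ := hx
    have : (0:ℝ) ≤ p.1 := by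
      simp only [myW, List.mem_cons, List.not_mem_nil, or_false] at hp
      rcases hp with h|h|h|h|h|h|h|h|h <;> subst h <;> norm_num
    split <;> simp [this]
  norm := by
    intro φ h
    simp [myPval, myW, h]
    norm_num
  add := by
    intro φ ψ h
    simp only [myPval, myW_or_sum _ _ _ h]
    ring
  congr := by
    intro φ ψ h
    unfold myPval
    congr 1
    apply congrArg List.sum
    apply List.map_congr_left
    intro p _
    exact if_congr (h p.2) rfl rfl

theorem stmt13 : ∃ (H₁ H₂ H₃ : Fm ℕ) (P : ProbFun ℕ) (γ δ : Fm ℕ),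
    (∀ H ∈ [H₁, H₂, H₃], 0 < P.P H) ∧
    (∀ v, ¬ (γ.eval v ∧ δ.eval v)) ∧
    lRJ P [H₁, H₂, H₃] {δ} (H₂.or H₃) ∧
    lRJ P [H₁, H₂, H₃] {γ} (H₂.or H₃) ∧
    ¬ lRJ P [H₁, H₂, H₃] {δ.or γ} (H₂.or H₃) := by
  refine ⟨Fm.var 0, Fm.var 1, Fm.var 2, myP, (Fm.var 3).neg.and (Fm.var 4), Fm.var 3,
    ?_, ?_, ?_, ?_, ?_⟩
  · intro H hH
    simp only [List.mem_cons, List.not_mem_nil, or_false] at hH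
    rcases hH with rfl|rfl|rfl <;>
      · show (0:ℝ) < myPval _
        norm_num [myPval, myW, Fm.eval, myVal]
  · rintro v ⟨⟨h1, _⟩, h2⟩
    exact h1 h2
  · rintro H ⟨hmem, hmin⟩
    simp only [List.mem_cons, List.not_mem_nil, or_false] at hmem
    rcases hmem with rfl|rfl|rfl
    · exfalso
      have := hmin (Fm.var 1) (by simp)
      norm_num [rlM, rl, ProbFun.cond, myP, myPval, myW, Fm.eval, myVal] at this
    · exact fun v _ hv => Or.inl hv
    · exact fun v _ hv => Or.inr hv
  · rintro H ⟨hmem, hmin⟩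
    simp only [List.mem_cons, List.not_mem_nil, or_false] at hmem
    rcases hmem with rfl|rfl|rfl
    · exfalso
      have := hmin (Fm.var 2) (by simp)
      norm_num [rlM, rl, ProbFun.cond, myP, myPval, myW, Fm.eval, myVal] at this
    · exact fun v _ hv => Or.inl hv
    · exact fun v _ hv => Or.inr hv
  · intro h
    have hmem : Fm.var 0 ∈ minSetL myP [Fm.var 0, Fm.var 1, Fm.var 2]
        {(Fm.var 3).or ((Fm.var 3).neg.and (Fm.var 4))} := by
      refine ⟨by simp, ?_⟩
      intro H' hH'
      simp only [List.mem_cons, List.not_mem_nil, or_false] at hH'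
      rcases hH' with rfl|rfl|rfl <;>
        norm_num [rlM, rl, ProbFun.cond, myP, myPval, myW, Fm.eval, myVal]
    have hpart : partitionHolds [Fm.var 0, Fm.var 1, Fm.var 2] (myVal 0 0) := by
      constructor
      · exact ⟨Fm.var 0, by simp, by simp [Fm.eval, myVal]⟩
      · intro g hg g' hg' hne he
        simp only [List.mem_cons, List.not_mem_nil, or_false] at hg hg'
        rcases hg with rfl|rfl|rfl <;> rcases hg' with rfl|rfl|rfl <;>
          first
            | exact hne rfl
            | simp [Fm.eval, myVal] at he
    have := h (Fm.var 0) hmem (myVal 0 0) hpart (by simp [Fm.eval, myVal])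
    simp [Fm.eval, myVal] at this
end

section
/- uRJ-consequence satisfies the OR rule: if Δ ∪ {γ} ⊨_uRJ ψ and Δ ∪ {δ} ⊨_uRJ ψ then Δ ∪ {γ ∨ δ} ⊨_uRJ ψ. -/
open scoped Classical ENNReal

lemma tentails_or_neg {α : Type} (Hs : List (Fm α)) (γ δ H : Fm α) :
    TEntails Hs H (γ.or δ).neg ↔ TEntails Hs H γ.neg ∧ TEntails Hs H δ.neg := by
  constructor
  · intro h
    exact ⟨fun v hv hH hg => h v hv hH (Or.inl hg),
           fun v hv hH hd => h v hv hH (Or.inr hd)⟩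
  · rintro ⟨ha, hb⟩ v hv hH hor
    cases hor with
    | inl h => exact ha v hv hH h
    | inr h => exact hb v hv hH h

lemma ru_or {α : Type} (Hs : List (Fm α)) (γ δ H : Fm α) :
    ru Hs (γ.or δ) H = min (ru Hs γ H) (ru Hs δ H) := by
  unfold ru
  by_cases cγ : ∀ v, partitionHolds Hs v → ¬ γ.eval v <;>
    by_cases cδ : ∀ v, partitionHolds Hs v → ¬ δ.eval v
  · rw [if_pos cγ, if_pos cδ, if_pos]
    · simp
    · intro v hv hor
      cases hor with
      | inl h => exact cγ v hv h
      | inr h => exact cδ v hv h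
  · have cor : ¬ ∀ v, partitionHolds Hs v → ¬ (γ.or δ).eval v := by
      intro h
      apply cδ
      intro v hv hd
      exact h v hv (Or.inr hd)
    rw [if_pos cγ, if_neg cδ, if_neg cor]
    have : TEntails Hs H (γ.or δ).neg ↔ TEntails Hs H δ.neg := by
      rw [tentails_or_neg]
      constructor
      · exact fun h => h.2
      · exact fun h => ⟨fun v hv _ hg => cγ v hv hg, h⟩
    by_cases hd : TEntails Hs H δ.neg
    · rw [if_pos (this.mpr hd), if_pos hd]; simp
    · rw [if_neg (fun h => hd (this.mp h)), if_neg hd]; simp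
  · have cor : ¬ ∀ v, partitionHolds Hs v → ¬ (γ.or δ).eval v := by
      intro h
      apply cγ
      intro v hv hg
      exact h v hv (Or.inl hg)
    rw [if_neg cγ, if_pos cδ, if_neg cor]
    have : TEntails Hs H (γ.or δ).neg ↔ TEntails Hs H γ.neg := by
      rw [tentails_or_neg]
      constructor
      · exact fun h => h.1
      · exact fun h => ⟨h, fun v hv _ hd => cδ v hv hd⟩
    by_cases hg : TEntails Hs H γ.neg
    · rw [if_pos (this.mpr hg), if_pos hg]; simp
    · rw [if_neg (fun h => hg (this.mp h)), if_neg hg]; simp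
  · have cor : ¬ ∀ v, partitionHolds Hs v → ¬ (γ.or δ).eval v := by
      intro h
      apply cγ
      intro v hv hg
      exact h v hv (Or.inl hg)
    rw [if_neg cγ, if_neg cδ, if_neg cor]
    by_cases hg : TEntails Hs H γ.neg <;> by_cases hd : TEntails Hs H δ.neg
    · rw [if_pos ((tentails_or_neg Hs γ δ H).mpr ⟨hg, hd⟩), if_pos hg, if_pos hd]; simp
    · rw [if_neg (fun h => hd ((tentails_or_neg Hs γ δ H).mp h).2), if_pos hg, if_neg hd]
      simp
    · rw [if_neg (fun h => hg ((tentails_or_neg Hs γ δ H).mp h).1), if_neg hg, if_pos hd]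
      simp
    · rw [if_neg (fun h => hg ((tentails_or_neg Hs γ δ H).mp h).1), if_neg hg, if_neg hd]
      simp

lemma ruM_or_cons {α : Type} (Hs : List (Fm α)) (Δ : Multiset (Fm α)) (γ δ H : Fm α) :
    ruM Hs ((γ.or δ) ::ₘ Δ) H = min (ruM Hs (γ ::ₘ Δ) H) (ruM Hs (δ ::ₘ Δ) H) := by
  simp only [ruM, Multiset.map_cons, Multiset.sum_cons, ru_or]
  exact (min_add_add_right _ _ _).symm

theorem stmt15 {α : Type} (Hs : List (Fm α)) (Δ : Multiset (Fm α)) (γ δ ψ : Fm α)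
    (h1 : uRJ Hs (γ ::ₘ Δ) ψ) (h2 : uRJ Hs (δ ::ₘ Δ) ψ) :
    uRJ Hs ((γ.or δ) ::ₘ Δ) ψ := by
  intro H hH
  obtain ⟨hmem, hfin, hmin⟩ := hH
  rw [ruM_or_cons] at hfin
  rcases min_cases (ruM Hs (γ ::ₘ Δ) H) (ruM Hs (δ ::ₘ Δ) H) with ⟨heq, _⟩ | ⟨heq, _⟩
  · apply h1 H
    refine ⟨hmem, by rw [← heq]; exact hfin, fun H' hH' => ?_⟩
    calc ruM Hs (γ ::ₘ Δ) H = ruM Hs ((γ.or δ) ::ₘ Δ) H := by rw [ruM_or_cons, heq]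
      _ ≤ ruM Hs ((γ.or δ) ::ₘ Δ) H' := hmin H' hH'
      _ ≤ ruM Hs (γ ::ₘ Δ) H' := by rw [ruM_or_cons]; exact min_le_left _ _
  · apply h2 H
    refine ⟨hmem, by rw [← heq]; exact hfin, fun H' hH' => ?_⟩
    calc ruM Hs (δ ::ₘ Δ) H = ruM Hs ((γ.or δ) ::ₘ Δ) H := by rw [ruM_or_cons, heq]
      _ ≤ ruM Hs ((γ.or δ) ::ₘ Δ) H' := hmin H' hH'
      _ ≤ ruM Hs (δ ::ₘ Δ) H' := by rw [ruM_or_cons]; exact min_le_right _ _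
end

section
/- uRJ-consequence satisfies a form of modus tollens (MT): if Δ ∪ {φ} ⊨_uRJ ψ and Δ ⊨_uRJ ¬ψ, then Δ ⊨_uRJ ¬φ. -/
open scoped Classical ENNReal

theorem stmt17 {α : Type} (Hs : List (Fm α)) (Δ : Multiset (Fm α)) (φ ψ : Fm α)
    (h1 : uRJ Hs (φ ::ₘ Δ) ψ) (h2 : uRJ Hs Δ ψ.neg) :
    uRJ Hs Δ φ.neg := by
  intro H hH v hpv hHv hφv
  obtain ⟨hHmem, hfin, hmin⟩ := hH
  have hA : ¬ ∀ v, partitionHolds Hs v → ¬ φ.eval v := fun hall => hall v hpv hφv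
  have hB : ¬ TEntails Hs H φ.neg := fun hT => hT v hpv hHv hφv
  have hru0 : ru Hs φ H = 0 := by simp [ru, hA, hB]
  have hcons : ∀ H', ruM Hs (φ ::ₘ Δ) H' = ru Hs φ H' + ruM Hs Δ H' := by
    intro H'; simp [ruM]
  have hHmin : H ∈ minSetU Hs (φ ::ₘ Δ) := by
    refine ⟨hHmem, ?_, ?_⟩
    · rw [hcons, hru0, zero_add]; exact hfin
    · intro H' hH'mem
      rw [hcons, hcons, hru0, zero_add]
      exact le_add_left (hmin H' hH'mem)
  have hψ := h1 H hHmin v hpv hHv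
  have hnψ := h2 H ⟨hHmem, hfin, hmin⟩ v hpv hHv
  exact hnψ hψ
end
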